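/- Let μ be a finite positive Borel measure on the unit circle T with infinite support, K_n its Christoffel kernel, w ∈ T, and let ζ_{0n}, …, ζ_{nn} ∈ T be the n+1 (simple) zeros of the para-orthogonal polynomial B_{n+1}(w,·). Then the polynomials L_{jn}(z) := K_n(ζ_{jn}, z) / sqrt(K_n(ζ_{jn}, ζ_{jn})), for j = 0, …, n, form an orthonormal basis of the space Π_n of polynomials of degree at most n, equipped with the inner product of L²(μ); in particular ∫_T L_{jn} conj(L_{mn}) dμ = δ_{jm}. -/

import Mathlib

/-!
The kernel `K_n(ζ, ·)` reproduces `Π_n`, so `⟨K_n(ζ_j, ·), K_n(ζ_m, ·)⟩ = K_n(ζ_j, ζ_m)` and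
orthonormality comes down to `K_n(ζ_j, ζ_m) = 0` for `j ≠ m`. The polynomial
`B = B_{n+1}(w, ·)` is orthogonal to `z Π_{n-1}`. Dividing out a zero `ζ ∈ T`, `B = (z - ζ) r`,
the identity `conj (z - ζ) = -conj ζ (z - ζ) conj z` on `T` turns this into
`r ⊥ {p ∈ Π_n : p(ζ) = 0}`, which forces `r` to be a nonzero multiple of `K_n(ζ, ·)`; as `r`
vanishes at every other zero `ξ` of `B`, `K_n(ζ, ξ) = 0`. Spanning is Lagrange interpolation:
`p - ∑ p(ζ_j) K_n(ζ_j, ·) / K_n(ζ_j, ζ_j)` has degree `≤ n` and the `n + 1` zeros `ζ_j`.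
-/

open MeasureTheory Polynomial Filter
open scoped ComplexConjugate Topology

/-- The Christoffel kernel `K_n(w,z) = ∑_{j=0}^n conj(φ_j(w)) φ_j(z)`. -/
noncomputable def christoffelK (φ : ℕ → Polynomial ℂ) (n : ℕ) (w z : ℂ) : ℂ :=
  ∑ j ∈ Finset.range (n + 1), conj ((φ j).eval w) * (φ j).eval z

/-- The para-orthogonal polynomial `B_{n+1}(w,z) = (1 − conj(w) z) K_n(w,z)`. -/
noncomputable def paraOrtho (φ : ℕ → Polynomial ℂ) (n : ℕ) (w z : ℂ) : ℂ :=
  (1 - conj w * z) * christoffelK φ n w z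

/-- The Christoffel kernel `K_n(w,·)` as a polynomial in the second variable. -/
noncomputable def christoffelKPoly (φ : ℕ → Polynomial ℂ) (n : ℕ) (w : ℂ) : Polynomial ℂ :=
  ∑ j ∈ Finset.range (n + 1), Polynomial.C (conj ((φ j).eval w)) * φ j

/-- The polynomial `L_{jn}(z) = K_n(ζ_j, z) / sqrt(K_n(ζ_j, ζ_j))`
(here `K_n(ζ_j,ζ_j) = ∑_k |φ_k(ζ_j)|²` is a positive real number). -/
noncomputable def LPoly (φ : ℕ → Polynomial ℂ) (n : ℕ) (ζ : Fin (n + 1) → ℂ) (j : Fin (n + 1)) :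
    Polynomial ℂ :=
  ((Real.sqrt ((christoffelK φ n (ζ j) (ζ j)).re) : ℂ))⁻¹ • christoffelKPoly φ n (ζ j)

section PolyInner

variable {μ : Measure ℂ} [IsFiniteMeasure μ]

theorem integrable_eval_mul_conj_eval (hμ : ∀ᵐ z ∂μ, z ∈ Metric.sphere (0 : ℂ) 1)
    (p q : ℂ[X]) : Integrable (fun z => p.eval z * conj (q.eval z)) μ := by
  rw [← Measure.restrict_eq_self_of_ae_mem hμ]
  exact (by fun_prop : Continuous fun z => p.eval z * conj (q.eval z)).continuousOn
    |>.integrableOn_compact (isCompact_sphere 0 1)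

noncomputable def polyInner (hμ : ∀ᵐ z ∂μ, z ∈ Metric.sphere (0 : ℂ) 1) :
    ℂ[X] →ₗ[ℂ] ℂ[X] →ₗ⋆[ℂ] ℂ :=
  LinearMap.mk₂'ₛₗ (RingHom.id ℂ) (starRingEnd ℂ)
    (fun p q => ∫ z, p.eval z * conj (q.eval z) ∂μ)
    (fun p p' q => by
      simp only [eval_add, add_mul]
      exact integral_add (integrable_eval_mul_conj_eval hμ p q)
        (integrable_eval_mul_conj_eval hμ p' q))
    (fun c p q => by
      simp only [eval_smul, smul_eq_mul, mul_assoc, RingHom.id_apply]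
      exact integral_const_mul c _)
    (fun p q q' => by
      simp only [eval_add, map_add, mul_add]
      exact integral_add (integrable_eval_mul_conj_eval hμ p q)
        (integrable_eval_mul_conj_eval hμ p q'))
    (fun c p q => by
      simp only [eval_smul, smul_eq_mul, map_mul, mul_left_comm _ (conj c)]
      exact integral_const_mul _ _)

variable (hμ : ∀ᵐ z ∂μ, z ∈ Metric.sphere (0 : ℂ) 1)

theorem polyInner_apply (p q : ℂ[X]) :
    polyInner hμ p q = ∫ z, p.eval z * conj (q.eval z) ∂μ := rfl

theorem conj_polyInner (p q : ℂ[X]) : conj (polyInner hμ p q) = polyInner hμ q p := by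
  simp only [polyInner_apply, ← integral_conj, map_mul, Complex.conj_conj, mul_comm]

theorem polyInner_X_mul_X (p q : ℂ[X]) : polyInner hμ (X * p) (X * q) = polyInner hμ p q := by
  refine integral_congr_ae (hμ.mono fun z hz => ?_)
  have hz : conj z * z = 1 := by simp [Complex.conj_mul', mem_sphere_zero_iff_norm.1 hz]
  simp only [eval_mul, eval_X, map_mul]
  linear_combination (p.eval z * conj (q.eval z)) * hz

theorem polyInner_eq_zero_of_polyInner_self_eq_zero {p : ℂ[X]} (hp : polyInner hμ p p = 0)
    (q : ℂ[X]) : polyInner hμ p q = 0 := by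
  have hnorm : ∀ z, p.eval z * conj (p.eval z) = ((‖p.eval z‖ ^ 2 : ℝ) : ℂ) := fun z => by
    rw [mul_comm, Complex.conj_mul']; push_cast; rfl
  have hint : ∫ z, ‖p.eval z‖ ^ 2 ∂μ = 0 := by
    rw [polyInner_apply] at hp
    simp only [hnorm] at hp
    exact_mod_cast hp
  have hae : (fun z => ‖p.eval z‖ ^ 2) =ᵐ[μ] 0 :=
    (integral_eq_zero_iff_of_nonneg (fun z => by positivity)
      ((integrable_eval_mul_conj_eval hμ p p).norm.congr
        (ae_of_all _ fun z => by simp [hnorm]))).1 hint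
  rw [polyInner_apply]
  exact integral_eq_zero_of_ae (hae.mono fun z hz => by simp_all)

theorem polyInner_mul_X_sub_C {ζ : ℂ} (hζ : ‖ζ‖ = 1) (r s : ℂ[X]) :
    polyInner hμ r ((X - C ζ) * s) = -conj ζ * polyInner hμ ((X - C ζ) * r) (X * s) := by
  have hζ' : conj ζ * ζ = 1 := by simp [Complex.conj_mul', hζ]
  simp only [sub_mul, ← smul_eq_C_mul, map_sub, map_smul, map_smulₛₗ,
    LinearMap.sub_apply, LinearMap.smul_apply, polyInner_X_mul_X, smul_eq_mul]
  linear_combination (-polyInner hμ r (X * s)) * hζ'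

end PolyInner

theorem X_sub_C_mul_mem_degreeLT_succ_iff {R : Type*} [CommRing R] [Nontrivial R] (a : R)
    (r : R[X]) (n : ℕ) : (X - C a) * r ∈ R[X]_(n + 1) ↔ r ∈ R[X]_n := by
  rw [mem_degreeLT, mem_degreeLT, mul_comm, (monic_X_sub_C a).degree_mul, degree_X_sub_C,
    Nat.cast_add, Nat.cast_one]
  exact WithBot.add_lt_add_iff_right WithBot.one_ne_bot

section ChristoffelKernel

variable {φ : ℕ → ℂ[X]} (hdeg : ∀ k, (φ k).degree = (k : ℕ))
include hdeg

theorem span_image_Iio_eq_degreeLT (n : ℕ) : Submodule.span ℂ (φ '' Set.Iio n) = ℂ[X]_n :=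
  Sequence.span_degreeLT ⟨φ, hdeg⟩ fun i _ =>
    (leadingCoeff_ne_zero.2 (Sequence.ne_zero ⟨φ, hdeg⟩ i)).isUnit

theorem christoffelKPoly_mem_degreeLT (n : ℕ) (w : ℂ) : christoffelKPoly φ n w ∈ ℂ[X]_(n + 1) := by
  rw [← span_image_Iio_eq_degreeLT hdeg]
  refine Submodule.sum_mem _ fun j hj => ?_
  rw [← smul_eq_C_mul]
  exact Submodule.smul_mem _ _ (Submodule.subset_span ⟨j, Finset.mem_range.1 hj, rfl⟩)

omit hdeg in
theorem eval_christoffelKPoly (n : ℕ) (w z : ℂ) :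
    (christoffelKPoly φ n w).eval z = christoffelK φ n w z := by
  simp [christoffelKPoly, christoffelK, eval_finsetSum]

omit hdeg in
theorem christoffelK_self (n : ℕ) (z : ℂ) :
    christoffelK φ n z z = ((∑ j ∈ Finset.range (n + 1), ‖(φ j).eval z‖ ^ 2 : ℝ) : ℂ) := by
  push_cast
  exact Finset.sum_congr rfl fun j _ => Complex.conj_mul' _

theorem christoffelK_self_re_pos (n : ℕ) (z : ℂ) : 0 < (christoffelK φ n z z).re := by
  have hφ0 : (φ 0).eval z ≠ 0 := by
    have hC := eq_C_of_degree_eq_zero (hdeg 0)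
    rw [hC, eval_C, Ne, ← C_eq_zero, ← hC]
    exact Sequence.ne_zero ⟨φ, hdeg⟩ 0
  rw [christoffelK_self, Complex.ofReal_re]
  exact Finset.sum_pos' (fun j _ => by positivity) ⟨0, by simp, by positivity⟩

theorem christoffelK_self_ne_zero (n : ℕ) (z : ℂ) : christoffelK φ n z z ≠ 0 :=
  fun h => (christoffelK_self_re_pos hdeg n z).ne' (by simp [h])

variable {μ : Measure ℂ} [IsFiniteMeasure μ] (hμ : ∀ᵐ z ∂μ, z ∈ Metric.sphere (0 : ℂ) 1)
  (horth : ∀ k m, polyInner hμ (φ k) (φ m) = if k = m then 1 else 0)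
include horth

theorem polyInner_christoffelKPoly {n : ℕ} {p : ℂ[X]} (hp : p ∈ ℂ[X]_(n + 1)) (w : ℂ) :
    polyInner hμ p (christoffelKPoly φ n w) = p.eval w := by
  rw [← span_image_Iio_eq_degreeLT hdeg] at hp
  refine LinearMap.eqOn_span' (f := (polyInner hμ).flip (christoffelKPoly φ n w)) (g := leval w)
    ?_ hp
  rintro _ ⟨k, hk, rfl⟩
  simp [christoffelKPoly, ← smul_eq_C_mul, horth, Set.mem_Iio.1 hk]

theorem polyInner_christoffelKPoly_christoffelKPoly (n : ℕ) (v w : ℂ) :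
    polyInner hμ (christoffelKPoly φ n v) (christoffelKPoly φ n w) = christoffelK φ n v w := by
  rw [polyInner_christoffelKPoly hdeg hμ horth (christoffelKPoly_mem_degreeLT hdeg n v),
    eval_christoffelKPoly]

theorem eq_zero_of_polyInner_self_eq_zero {n : ℕ} {p : ℂ[X]} (hp : p ∈ ℂ[X]_(n + 1))
    (hpp : polyInner hμ p p = 0) : p = 0 :=
  Polynomial.funext fun z => by
    rw [← polyInner_christoffelKPoly hdeg hμ horth hp z, eval_zero]
    exact polyInner_eq_zero_of_polyInner_self_eq_zero hμ hpp _

theorem eq_smul_christoffelKPoly_of_orthogonal {n : ℕ} {r : ℂ[X]} (hr : r ∈ ℂ[X]_(n + 1)) (ζ : ℂ)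
    (h : ∀ p ∈ ℂ[X]_(n + 1), p.eval ζ = 0 → polyInner hμ r p = 0) :
    r = (r.eval ζ / christoffelK φ n ζ ζ) • christoffelKPoly φ n ζ := by
  set c := r.eval ζ / christoffelK φ n ζ ζ
  set K := christoffelKPoly φ n ζ
  obtain ⟨t, ht_def⟩ : ∃ t, t = r - c • K := ⟨_, rfl⟩
  have ht : t ∈ ℂ[X]_(n + 1) :=
    ht_def ▸ sub_mem hr (Submodule.smul_mem _ _ (christoffelKPoly_mem_degreeLT hdeg n ζ))
  have htζ : t.eval ζ = 0 := by
    simp [ht_def, c, K, eval_christoffelKPoly, christoffelK_self_ne_zero hdeg]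
  have htt : polyInner hμ t t = 0 :=
    calc polyInner hμ t t = polyInner hμ r t - c * conj (polyInner hμ t K) := by
          rw [conj_polyInner]
          nth_rw 1 [ht_def]
          rw [LinearMap.map_sub₂, LinearMap.map_smul₂, smul_eq_mul]
      _ = 0 := by rw [h t ht htζ, polyInner_christoffelKPoly hdeg hμ horth ht, htζ]; simp
  rw [← sub_eq_zero, ← ht_def]
  exact eq_zero_of_polyInner_self_eq_zero hdeg hμ horth ht htt

end ChristoffelKernel

noncomputable def paraOrthoPoly (φ : ℕ → ℂ[X]) (n : ℕ) (w : ℂ) : ℂ[X] :=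
  (1 - C (conj w) * X) * christoffelKPoly φ n w

section ParaOrthogonal

variable {φ : ℕ → ℂ[X]}

theorem eval_paraOrthoPoly (n : ℕ) (w z : ℂ) :
    (paraOrthoPoly φ n w).eval z = paraOrtho φ n w z := by
  simp [paraOrthoPoly, paraOrtho, eval_christoffelKPoly]

variable (hdeg : ∀ k, (φ k).degree = (k : ℕ))
include hdeg

theorem paraOrthoPoly_ne_zero (n : ℕ) (w : ℂ) : paraOrthoPoly φ n w ≠ 0 := by
  refine mul_ne_zero (fun h => by simpa using congrArg (eval 0) h) fun h => ?_
  apply christoffelK_self_ne_zero hdeg n w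
  rw [← eval_christoffelKPoly, h, eval_zero]

theorem paraOrthoPoly_mem_degreeLT (n : ℕ) (w : ℂ) : paraOrthoPoly φ n w ∈ ℂ[X]_(n + 2) := by
  have h := (X_sub_C_mul_mem_degreeLT_succ_iff 0 _ (n + 1)).2
    (christoffelKPoly_mem_degreeLT hdeg n w)
  rw [paraOrthoPoly, sub_mul, one_mul, ← smul_eq_C_mul, smul_mul_assoc]
  rw [C_0, sub_zero] at h
  exact sub_mem (degreeLT_mono (by omega) (christoffelKPoly_mem_degreeLT hdeg n w))
    (Submodule.smul_mem _ _ h)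

variable {μ : Measure ℂ} [IsFiniteMeasure μ] (hμ : ∀ᵐ z ∂μ, z ∈ Metric.sphere (0 : ℂ) 1)
  (horth : ∀ k m, polyInner hμ (φ k) (φ m) = if k = m then 1 else 0)
include horth

theorem polyInner_paraOrthoPoly_X_mul {n : ℕ} (w : ℂ) {s : ℂ[X]} (hs : s ∈ ℂ[X]_n) :
    polyInner hμ (paraOrthoPoly φ n w) (X * s) = 0 := by
  have hXs := (X_sub_C_mul_mem_degreeLT_succ_iff 0 s n).2 hs
  rw [C_0, sub_zero] at hXs
  rw [paraOrthoPoly, sub_mul, one_mul, mul_assoc, LinearMap.map_sub₂, ← smul_eq_C_mul,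
    LinearMap.map_smul₂, polyInner_X_mul_X, ← conj_polyInner,
    polyInner_christoffelKPoly hdeg hμ horth hXs, ← conj_polyInner hμ s,
    polyInner_christoffelKPoly hdeg hμ horth (degreeLT_mono (by omega) hs)]
  simp

theorem christoffelK_eq_zero_of_paraOrtho_eq_zero {n : ℕ} {w ζ ξ : ℂ} (hζ : ‖ζ‖ = 1)
    (hζξ : ζ ≠ ξ) (hζ0 : paraOrtho φ n w ζ = 0) (hξ0 : paraOrtho φ n w ξ = 0) :
    christoffelK φ n ζ ξ = 0 := by
  set r := paraOrthoPoly φ n w /ₘ (X - C ζ)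
  have hfr : (X - C ζ) * r = paraOrthoPoly φ n w :=
    mul_divByMonic_eq_iff_isRoot.2 (by rwa [IsRoot, eval_paraOrthoPoly])
  have hr : r ∈ ℂ[X]_(n + 1) := (X_sub_C_mul_mem_degreeLT_succ_iff ζ r (n + 1)).1
    (hfr ▸ paraOrthoPoly_mem_degreeLT hdeg n w)
  have hrK := eq_smul_christoffelKPoly_of_orthogonal hdeg hμ horth hr ζ fun p hp hpζ => by
    rw [← mul_divByMonic_eq_iff_isRoot.2 hpζ, polyInner_mul_X_sub_C hμ hζ, hfr,
      polyInner_paraOrthoPoly_X_mul hdeg hμ horth w ((X_sub_C_mul_mem_degreeLT_succ_iff ζ _ n).1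
        ((mul_divByMonic_eq_iff_isRoot.2 hpζ).symm ▸ hp)), mul_zero]
  have hrξ : r.eval ξ = 0 := by
    have h := congrArg (eval ξ) hfr
    rw [eval_mul, eval_paraOrthoPoly, hξ0] at h
    simpa [sub_ne_zero.2 hζξ.symm] using h
  have hc : r.eval ζ / christoffelK φ n ζ ζ ≠ 0 := by
    refine div_ne_zero (fun h0 => paraOrthoPoly_ne_zero hdeg n w ?_)
      (christoffelK_self_ne_zero hdeg n ζ)
    rw [← hfr, hrK, h0, zero_div, zero_smul, mul_zero]
  rw [hrK, eval_smul, eval_christoffelKPoly, smul_eq_mul] at hrξ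
  exact (mul_eq_zero.1 hrξ).resolve_left hc

end ParaOrthogonal

section Nodes

variable {φ : ℕ → ℂ[X]} (hdeg : ∀ k, (φ k).degree = (k : ℕ)) {n : ℕ} {ζ : Fin (n + 1) → ℂ}
  (hK : ∀ j m, j ≠ m → christoffelK φ n (ζ j) (ζ m) = 0)
include hdeg

theorem LPoly_mem_degreeLT (j : Fin (n + 1)) : LPoly φ n ζ j ∈ ℂ[X]_(n + 1) :=
  Submodule.smul_mem _ _ (christoffelKPoly_mem_degreeLT hdeg n (ζ j))

include hK

theorem polyInner_LPoly {μ : Measure ℂ} [IsFiniteMeasure μ]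
    (hμ : ∀ᵐ z ∂μ, z ∈ Metric.sphere (0 : ℂ) 1)
    (horth : ∀ k m, polyInner hμ (φ k) (φ m) = if k = m then 1 else 0) (j m : Fin (n + 1)) :
    polyInner hμ (LPoly φ n ζ j) (LPoly φ n ζ m) = if j = m then 1 else 0 := by
  rw [LPoly, LPoly, LinearMap.map_smul₂, map_smulₛₗ,
    polyInner_christoffelKPoly_christoffelKPoly hdeg hμ horth]
  split_ifs with hjm
  · subst hjm
    have hpos := christoffelK_self_re_pos hdeg n (ζ j)
    rw [christoffelK_self, Complex.ofReal_re] at hpos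
    have hsq : ((√(∑ k ∈ Finset.range (n + 1), ‖(φ k).eval (ζ j)‖ ^ 2) : ℝ) : ℂ) ^ 2
        = ((∑ k ∈ Finset.range (n + 1), ‖(φ k).eval (ζ j)‖ ^ 2 : ℝ) : ℂ) := by
      exact_mod_cast Real.sq_sqrt hpos.le
    rw [christoffelK_self, Complex.ofReal_re, map_inv₀, Complex.conj_ofReal, smul_eq_mul,
      smul_eq_mul, ← mul_assoc, ← mul_inv, ← sq, ← hsq,
      inv_mul_cancel₀ (pow_ne_zero 2 (by exact_mod_cast (Real.sqrt_pos.2 hpos).ne'))]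
  · simp [hK j m hjm]

theorem eq_sum_smul_christoffelKPoly (hζ : Function.Injective ζ) {p : ℂ[X]}
    (hp : p ∈ ℂ[X]_(n + 1)) :
    p = ∑ j, (p.eval (ζ j) / christoffelK φ n (ζ j) (ζ j)) • christoffelKPoly φ n (ζ j) := by
  refine sub_eq_zero.1 (eq_zero_of_natDegree_lt_card_of_eval_eq_zero _ hζ (fun m => ?_) ?_)
  · rw [eval_sub, eval_finsetSum, Finset.sum_eq_single m (fun j _ hjm => by
      rw [eval_smul, eval_christoffelKPoly, hK j m hjm, smul_zero]) (by simp)]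
    rw [eval_smul, eval_christoffelKPoly, smul_eq_mul,
      div_mul_cancel₀ _ (christoffelK_self_ne_zero hdeg n (ζ m)), sub_self]
  · rw [Fintype.card_fin, Nat.lt_succ_iff]
    refine natDegree_le_of_degree_le (mem_degreeLE.1 ?_)
    rw [← degreeLT_succ_eq_degreeLE]
    exact sub_mem hp (Submodule.sum_mem _ fun j _ =>
      Submodule.smul_mem _ _ (christoffelKPoly_mem_degreeLT hdeg n (ζ j)))

theorem mem_span_LPoly (hζ : Function.Injective ζ) {p : ℂ[X]} (hp : p ∈ ℂ[X]_(n + 1)) :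
    p ∈ Submodule.span ℂ (Set.range (LPoly φ n ζ)) := by
  rw [eq_sum_smul_christoffelKPoly hdeg hK hζ hp]
  refine Submodule.sum_mem _ fun j _ => Submodule.smul_mem _ _ ?_
  have hs : ((√(christoffelK φ n (ζ j) (ζ j)).re : ℝ) : ℂ) ≠ 0 := by
    exact_mod_cast (Real.sqrt_pos.2 (christoffelK_self_re_pos hdeg n (ζ j))).ne'
  rw [← one_smul ℂ (christoffelKPoly φ n (ζ j)), ← mul_inv_cancel₀ hs, ← smul_smul]
  exact Submodule.smul_mem _ _ (Submodule.subset_span ⟨j, rfl⟩)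

end Nodes

theorem LPoly_orthonormal_basis_general
    (μ : Measure ℂ) [IsFiniteMeasure μ]
    (hμT : μ (Metric.sphere (0 : ℂ) 1)ᶜ = 0)
    (φ : ℕ → Polynomial ℂ)
    (hdeg : ∀ k, (φ k).degree = (k : ℕ))
    (horth : ∀ k m, ∫ z, (φ k).eval z * conj ((φ m).eval z) ∂μ
        = if k = m then 1 else 0)
    (n : ℕ) (w : ℂ)
    (ζ : Fin (n + 1) → ℂ)
    (hζT : ∀ j, ζ j ∈ Metric.sphere (0 : ℂ) 1)
    (hζinj : Function.Injective ζ)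
    (hζ0 : ∀ j, paraOrtho φ n w (ζ j) = 0) :
    (∀ j, (LPoly φ n ζ j).degree ≤ n) ∧
    (∀ j m, ∫ z, (LPoly φ n ζ j).eval z * conj ((LPoly φ n ζ m).eval z) ∂μ
        = if j = m then 1 else 0) ∧
    (∀ p : Polynomial ℂ, p.degree ≤ n →
        p ∈ Submodule.span ℂ (Set.range (LPoly φ n ζ))) := by
  have hμ : ∀ᵐ z ∂μ, z ∈ Metric.sphere (0 : ℂ) 1 := mem_ae_iff.2 hμT
  have hK : ∀ j m, j ≠ m → christoffelK φ n (ζ j) (ζ m) = 0 := fun j m hjm =>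
    christoffelK_eq_zero_of_paraOrtho_eq_zero hdeg hμ horth (mem_sphere_zero_iff_norm.1 (hζT j))
      (hζinj.ne hjm) (hζ0 j) (hζ0 m)
  refine ⟨fun j => ?_, polyInner_LPoly hdeg hK hμ horth, fun p hp => ?_⟩
  · simpa [degreeLT_succ_eq_degreeLE, mem_degreeLE] using LPoly_mem_degreeLT hdeg (ζ := ζ) j
  · exact mem_span_LPoly hdeg hK hζinj (by rwa [degreeLT_succ_eq_degreeLE, mem_degreeLE])

/-- The polynomials `L_{jn}(z) = K_n(ζ_{jn}, z)/sqrt(K_n(ζ_{jn}, ζ_{jn}))`, `j = 0,…,n`,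
built on the `n+1` (simple) zeros `ζ_{0n},…,ζ_{nn} ∈ T` of the para-orthogonal polynomial
`B_{n+1}(w,·)`, form an orthonormal basis of `Π_n` (polynomials of degree at most `n`)
for the `L²(μ)` inner product: they lie in `Π_n`, satisfy
`∫_T L_{jn} conj(L_{mn}) dμ = δ_{jm}`, and span `Π_n`. -/
theorem LPoly_orthonormal_basis
    (μ : Measure ℂ) [IsFiniteMeasure μ]
    (hμT : μ (Metric.sphere (0 : ℂ) 1)ᶜ = 0)
    (hμinf : ∀ s : Finset ℂ, μ ((s : Set ℂ)ᶜ) ≠ 0)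
    (φ : ℕ → Polynomial ℂ)
    (hdeg : ∀ k, (φ k).degree = (k : ℕ))
    (hlead : ∀ k, 0 < ((φ k).leadingCoeff).re ∧ ((φ k).leadingCoeff).im = 0)
    (horth : ∀ k m, ∫ z, (φ k).eval z * conj ((φ m).eval z) ∂μ
        = if k = m then 1 else 0)
    (n : ℕ) (w : ℂ) (hw : w ∈ Metric.sphere (0 : ℂ) 1)
    (ζ : Fin (n + 1) → ℂ)
    (hζT : ∀ j, ζ j ∈ Metric.sphere (0 : ℂ) 1)
    (hζinj : Function.Injective ζ)
    (hζ0 : ∀ j, paraOrtho φ n w (ζ j) = 0) :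
    (∀ j, (LPoly φ n ζ j).degree ≤ n) ∧
    (∀ j m, ∫ z, (LPoly φ n ζ j).eval z * conj ((LPoly φ n ζ m).eval z) ∂μ
        = if j = m then 1 else 0) ∧
    (∀ p : Polynomial ℂ, p.degree ≤ n →
        p ∈ Submodule.span ℂ (Set.range (LPoly φ n ζ))) :=
  LPoly_orthonormal_basis_general μ hμT φ hdeg horth n w ζ hζT hζinj hζ0
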